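/- Consider the CTRS R over constants a, b and unary symbol f, with rules (f(x) → a ⇐ x → a) and (f(x) → b ⇐ x → b) under the reachability semantics. Then the conjunction of conditions x →* a and x →* b is infeasible: there is no term t such that t →*_R a and t →*_R b. -/

import Mathlib

/-- Terms over the signature with constants `a`, `b` and unary symbol `f`. -/
inductive Tm where
  | a | b
  | f (t : Tm)

mutual
  /-- The one-step rewrite relation of the CTRS with rules `f(x) → a ⇐ x → a` and
  `f(x) → b ⇐ x → b` under the reachability semantics: rule instances (whose
  conditions hold w.r.t. `Rews`) closed under contexts. -/
  inductive Rew : Tm → Tm → Prop where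
    | rule1 (x : Tm) : Rews x .a → Rew (.f x) .a
    | rule2 (x : Tm) : Rews x .b → Rew (.f x) .b
    | f_congr {t t'} : Rew t t' → Rew (.f t) (.f t')

  /-- The many-step rewrite relation: reflexive and closed under prepending
  one-step rewrites. -/
  inductive Rews : Tm → Tm → Prop where
    | refl (t : Tm) : Rews t t
    | step {s u t : Tm} : Rew s u → Rews u t → Rews s t
end

/-! Every rule instance and every step under `f` preserves the constant at the bottom of a
term, so `→*` preserves it too; `a` and `b` have different bottom constants. -/

def Tm.bottom : Tm → Tm
  | .a => .a
  | .b => .b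
  | .f t => t.bottom

mutual
theorem Rew.bottom_eq {s t : Tm} : Rew s t → s.bottom = t.bottom
  | .rule1 _ h => h.bottom_eq
  | .rule2 _ h => h.bottom_eq
  | .f_congr h => h.bottom_eq

theorem Rews.bottom_eq {s t : Tm} : Rews s t → s.bottom = t.bottom
  | .refl _ => rfl
  | .step h hs => h.bottom_eq.trans hs.bottom_eq
end

/-- The conjunction of conditions `x →* a` and `x →* b` (from the conditional
critical pair `a ↓ b ⇐ x → a, x → b`) is infeasible: there is no term `t` such
that `t →*_R a` and `t →*_R b`. -/
theorem conditions_infeasible : ¬ ∃ t : Tm, Rews t .a ∧ Rews t .b := by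
  rintro ⟨t, ha, hb⟩
  have : Tm.a.bottom = Tm.b.bottom := ha.bottom_eq.symm.trans hb.bottom_eq
  exact Tm.noConfusion this
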